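/- arXiv:1603.03928 — 6 statements merged into one kernel-verified Lean document; each statement's English description precedes it below -/
import Mathlib

section
/- For an integer n > 2, the maximum over integers r ∈ [2, n-1] of 2r(n-r)/(n(n-1)) equals ⌊(n+1)/2⌋/(2⌊(n+1)/2⌋ - 1). -/
theorem stmt_4 (n : ℕ) (hn : 2 < n) :
    IsGreatest ((fun r : ℕ => 2 * (r : ℝ) * (n - r) / (n * (n - 1))) '' (Set.Icc 2 (n - 1)))
      ((((n + 1) / 2 : ℕ) : ℝ) / (2 * (((n + 1) / 2 : ℕ) : ℝ) - 1)) := by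
  set m : ℕ := (n + 1) / 2 with hm
  have hm2 : 2 ≤ m := by omega
  have hmn : m ≤ n - 1 := by omega
  have hM2 : (2:ℝ) ≤ m := by exact_mod_cast hm2
  have hnr : (1:ℝ) < n := by exact_mod_cast (by omega : 1 < n)
  have hR : (n:ℝ) = 2 * m ∨ (n:ℝ) = 2 * m - 1 := by
    have h : n = 2 * m ∨ n + 1 = 2 * m := by omega
    rcases h with h | h
    · left; exact_mod_cast h
    · right
      have : (n:ℝ) + 1 = 2 * m := by exact_mod_cast h
      linarith
  have hden : (0:ℝ) < n * (n - 1) := mul_pos (by linarith) (by linarith)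
  have hden2 : (0:ℝ) < 2 * (m:ℝ) - 1 := by linarith
  constructor
  · exact ⟨m, ⟨hm2, hmn⟩, by
      show 2 * (m:ℝ) * (n - m) / (n * (n - 1)) = (m:ℝ) / (2 * m - 1)
      rw [div_eq_div_iff hden.ne' hden2.ne']
      rcases hR with h | h <;> rw [h] <;> ring⟩
  · rintro x ⟨r, ⟨hr1, hr2⟩, rfl⟩
    show 2 * (r:ℝ) * (n - r) / (n * (n - 1)) ≤ (m:ℝ) / (2 * m - 1)
    rw [div_le_div_iff₀ hden hden2]
    have hrn : (r:ℝ) ≤ (n:ℝ) - 1 := by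
      have : (r:ℝ) ≤ ((n - 1 : ℕ) : ℝ) := by exact_mod_cast hr2
      have : ((n - 1 : ℕ) : ℝ) = (n:ℝ) - 1 := by
        have : 1 ≤ n := by omega
        push_cast [this]; ring
      linarith
    have hr1' : (2:ℝ) ≤ r := by exact_mod_cast hr1
    have hsplit : (r:ℝ) ≤ (m:ℝ) - 1 ∨ (m:ℝ) ≤ r := by
      rcases le_or_gt r (m - 1) with h | h
      · left
        have : (r:ℝ) ≤ ((m - 1 : ℕ) : ℝ) := by exact_mod_cast h
        have h1 : ((m - 1 : ℕ) : ℝ) = (m:ℝ) - 1 := by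
          have : 1 ≤ m := by omega
          push_cast [this]; ring
        linarith
      · right
        have : m ≤ r := by omega
        exact_mod_cast this
    -- key: r(n-r) ≤ m(n-m)
    have hkey : (r:ℝ) * ((n:ℝ) - r) ≤ (m:ℝ) * ((n:ℝ) - m) := by
      rcases hR with h | h
      · nlinarith [sq_nonneg ((m:ℝ) - r)]
      · rcases hsplit with hs | hs
        · nlinarith
        · nlinarith
    have heq : 2 * (m:ℝ) * ((n:ℝ) - m) * (2 * m - 1) = (m:ℝ) * ((n:ℝ) * ((n:ℝ) - 1)) := by
      rcases hR with h | h <;> rw [h] <;> ring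
    nlinarith [mul_le_mul_of_nonneg_right hkey hden2.le, heq]
end

section
/- With ϑ the unique root of -log x - 2 + 2x = 0 in (0,1), the limit as n → ∞ of P(⌊ϑn⌋, n), where P(r,n) = Σ_{i=r+1}^{n} 2(i-r)r/(i(i-1)n), equals 2(ϑ - ϑ²). -/
/-!
Since `(i - r) / (i (i - 1)) = r / i - (r - 1) / (i - 1)`, the sum telescopes into harmonic
numbers: `P(r, n) = 2 (r/n) (H_n - H_r) - 2 r/n + 2 (r/n)² + O(1/n)`. As `H_k = log k + γ + o(1)`,
`H_n - H_r → -log ϑ` when `r/n → ϑ > 0`, so the limit is `-2ϑ log ϑ - 2ϑ + 2ϑ²`, which the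
equation `log ϑ = 2ϑ - 2` turns into `2(ϑ - ϑ²)`.
-/

/-- The success probability of the cutoff strategy `r` when the number of objects is
uniform on `[1,n]` in the best-or-worst secretary problem. -/
noncomputable def uniformProb (r n : ℕ) : ℝ :=
  ∑ i ∈ Finset.Icc (r + 1) n, 2 * ((i : ℝ) - r) * r / (i * (i - 1) * n)

open Real Filter Finset Topology

lemma sum_cutoff_eq_harmonic {r n : ℕ} (hr : 1 ≤ r) (hrn : r ≤ n) :
    ∑ i ∈ Icc (r + 1) n, 2 * ((i : ℝ) - r) * r / (i * (i - 1))
      = 2 * r * ((harmonic n : ℝ) - harmonic r - 1 + 1 / r) + 2 * r * (r - 1) / n := by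
  have hr0 : (r : ℝ) ≠ 0 := Nat.cast_ne_zero.mpr (by omega)
  induction n, hrn using Nat.le_induction with
  | base =>
    rw [Icc_eq_empty (by omega), sum_empty]
    field_simp
    ring
  | succ n hrn ih =>
    have hn0 : (n : ℝ) ≠ 0 := Nat.cast_ne_zero.mpr (by omega)
    rw [sum_Icc_succ_top (by omega), ih, harmonic_succ]
    push_cast
    rw [add_sub_cancel_right]
    field_simp
    ring

lemma uniformProb_eq_harmonic {r n : ℕ} (hr : 1 ≤ r) (hrn : r ≤ n) :
    uniformProb r n = 2 * (r / n) * ((harmonic n : ℝ) - harmonic r) - 2 * (r / n)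
      + 2 * (1 / n) + 2 * (r / n) * (r / n - 1 / n) := by
  have hr0 : (r : ℝ) ≠ 0 := Nat.cast_ne_zero.mpr (by omega)
  have hn0 : (n : ℝ) ≠ 0 := Nat.cast_ne_zero.mpr (by omega)
  have h := congrArg (· / (n : ℝ)) (sum_cutoff_eq_harmonic hr hrn)
  simp only [sum_div, div_div] at h
  rw [uniformProb, h]
  field_simp

lemma tendsto_atTop_of_tendsto_div {r : ℕ → ℕ} {ϑ : ℝ} (hϑ : 0 < ϑ)
    (hr : Tendsto (fun n ↦ (r n : ℝ) / n) atTop (𝓝 ϑ)) : Tendsto r atTop atTop :=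
  tendsto_natCast_atTop_iff.mp (Tendsto.num tendsto_natCast_atTop_atTop hϑ hr)

lemma tendsto_harmonic_sub_harmonic {r : ℕ → ℕ} {ϑ : ℝ} (hϑ : 0 < ϑ)
    (hr : Tendsto (fun n ↦ (r n : ℝ) / n) atTop (𝓝 ϑ)) :
    Tendsto (fun n ↦ (harmonic n : ℝ) - harmonic (r n)) atTop (𝓝 (-log ϑ)) := by
  have hr_top := tendsto_atTop_of_tendsto_div hϑ hr
  have hγ := tendsto_harmonic_sub_log
  have hlog := ((continuousAt_log hϑ.ne').tendsto.comp hr)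
  have h := (hγ.sub (hγ.comp hr_top)).sub hlog
  rw [sub_self, zero_sub] at h
  refine h.congr' ?_
  filter_upwards [hr_top.eventually_ge_atTop 1, eventually_ge_atTop 1] with n hrn hn
  have hr0 : (r n : ℝ) ≠ 0 := by positivity
  have hn0 : (n : ℝ) ≠ 0 := by positivity
  simp only [Function.comp_apply, log_div hr0 hn0]
  ring

lemma tendsto_uniformProb {r : ℕ → ℕ} {ϑ : ℝ} (hϑ : 0 < ϑ)
    (hr : Tendsto (fun n ↦ (r n : ℝ) / n) atTop (𝓝 ϑ)) (hrn : ∀ᶠ n in atTop, r n ≤ n) :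
    Tendsto (fun n ↦ uniformProb (r n) n) atTop (𝓝 (2 * ϑ * (-log ϑ) - 2 * ϑ + 2 * ϑ ^ 2)) := by
  have hr_top := tendsto_atTop_of_tendsto_div hϑ hr
  have h1n : Tendsto (fun n : ℕ ↦ 1 / (n : ℝ)) atTop (𝓝 0) := tendsto_one_div_atTop_nhds_zero_nat
  have h := ((((hr.const_mul 2).mul (tendsto_harmonic_sub_harmonic hϑ hr)).sub
    (hr.const_mul 2)).add (h1n.const_mul 2)).add ((hr.const_mul 2).mul (hr.sub h1n))
  rw [mul_zero, add_zero, sub_zero, mul_assoc 2 ϑ ϑ, ← sq] at h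
  refine h.congr' ?_
  filter_upwards [hr_top.eventually_ge_atTop 1, hrn] with n h1 hrn
  exact (uniformProb_eq_harmonic h1 hrn).symm

theorem stmt_10 (ϑ : ℝ) (hϑ : ϑ ∈ Set.Ioo (0 : ℝ) 1)
    (heq : Real.log ϑ = 2 * ϑ - 2) :
    Filter.Tendsto (fun n : ℕ => uniformProb ⌊ϑ * n⌋₊ n) Filter.atTop
      (nhds (2 * (ϑ - ϑ ^ 2))) := by
  have hfloor_le : ∀ n : ℕ, ⌊ϑ * n⌋₊ ≤ n := fun n ↦
    Nat.floor_le_of_le (mul_le_of_le_one_left n.cast_nonneg hϑ.2.le)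
  have h := tendsto_uniformProb hϑ.1
    ((tendsto_nat_floor_mul_div_atTop hϑ.1.le).comp tendsto_natCast_atTop_atTop)
    (Eventually.of_forall hfloor_le)
  convert h using 2
  rw [heq]
  ring
end

section
/- With ϑ the unique root of -log x - 2 + 2x = 0 in (0,1), for every integer n > 1 the maximum over integers r ∈ [0,n] of P(r,n) = Σ_{i=r+1}^{n} 2(i-r)r/(i(i-1)n) is strictly greater than 2(ϑ - ϑ²). -/
open Real Finset

lemma Real.log_le_half_sub_inv {y : ℝ} (hy : 1 ≤ y) : log y ≤ (y - y⁻¹) / 2 := by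
  have hy0 : 0 < y := by linarith
  have h := self_le_sinh_iff.2 (log_nonneg hy)
  rwa [sinh_eq, exp_neg, exp_log hy0] at h

lemma Real.log_add_one_sub_log_le {x : ℝ} (hx : 0 < x) :
    log (x + 1) - log x ≤ (x⁻¹ + (x + 1)⁻¹) / 2 := by
  have h := log_le_half_sub_inv (y := (x + 1) / x) (by rw [le_div_iff₀ hx]; linarith)
  rw [log_div (by positivity) hx.ne'] at h
  convert h using 2
  field_simp
  ring

lemma log_sub_log_le_sum_Ico_inv {r n : ℕ} (hr : 1 ≤ r) (hrn : r ≤ n) :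
    log n - log r + 1 / (2 * r) - 1 / (2 * n) ≤ ∑ j ∈ Ico r n, (1 : ℝ) / j := by
  induction n, hrn using Nat.le_induction with
  | base => simp
  | succ n hrn ih =>
    have hn : (0 : ℝ) < n := by exact_mod_cast hr.trans hrn
    have h := log_add_one_sub_log_le hn
    rw [sum_Ico_succ_top hrn]
    push_cast
    have : ((n : ℝ)⁻¹ + (n + 1 : ℝ)⁻¹) / 2 = 1 / n - 1 / (2 * n) + 1 / (2 * (n + 1)) := by
      field_simp
      ring
    linarith

lemma uniformProb_eq_sum_Ico_inv {r n : ℕ} (hr : 1 ≤ r) (hrn : r ≤ n) :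
    uniformProb r n = 2 * r / n * (∑ j ∈ Ico r n, (1 : ℝ) / j - 1 + r / n) := by
  suffices h : ∑ i ∈ Icc (r + 1) n, 2 * ((i : ℝ) - r) * r / (i * (i - 1)) =
      2 * r * (∑ j ∈ Ico r n, (1 : ℝ) / j - 1 + r / n) by
    rw [uniformProb, div_mul_eq_mul_div, ← h, sum_div]
    refine sum_congr rfl fun i _ => ?_
    rw [div_div]
  have hr0 : (0 : ℝ) < r := by exact_mod_cast hr
  induction n, hrn using Nat.le_induction with
  | base =>
    rw [Icc_eq_empty (by omega), Ico_self]
    field_simp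
    ring
  | succ n hrn ih =>
    have hn : (n : ℝ) ≠ 0 := Nat.cast_ne_zero.2 (by omega)
    rw [sum_Icc_succ_top (by omega), sum_Ico_succ_top hrn, ih]
    push_cast
    rw [add_sub_cancel_right]
    field_simp
    ring

/-- The harmonic sum is bounded below by the trapezoidal rule and `log (n / r)` by the tangent of
`log` at `ϑ`; the equation for `ϑ` turns the result into `2 (ϑ - ϑ ^ 2)` minus a square. -/
lemma le_uniformProb_of_log_eq {ϑ : ℝ} (hϑ : 0 < ϑ) (heq : log ϑ = 2 * ϑ - 2) {r n : ℕ} (hr : 1 ≤ r)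
    (hrn : r ≤ n) :
    2 * (ϑ - ϑ ^ 2) + ((n - r) - (2 / ϑ - 2) * (r - ϑ * n) ^ 2) / n ^ 2 ≤ uniformProb r n := by
  have hr0 : (0 : ℝ) < r := by exact_mod_cast hr
  have hn0 : (0 : ℝ) < n := by exact_mod_cast hr.trans hrn
  have tangent := log_le_sub_one_of_pos (show 0 < (r : ℝ) / n / ϑ by positivity)
  rw [log_div (by positivity) hϑ.ne', log_div hr0.ne' hn0.ne', heq] at tangent
  rw [uniformProb_eq_sum_Ico_inv hr hrn]
  calc 2 * (ϑ - ϑ ^ 2) + ((n - r) - (2 / ϑ - 2) * (r - ϑ * n) ^ 2) / n ^ 2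
      = 2 * r / n * ((3 - 2 * ϑ - r / n / ϑ) + 1 / (2 * r) - 1 / (2 * n) - 1 + r / n) := by
        field_simp
        ring
    _ ≤ 2 * r / n * ((log n - log r) + 1 / (2 * r) - 1 / (2 * n) - 1 + r / n) := by
        gcongr 2 * r / n * (?_ + _ - _ - _ + _)
        linarith
    _ ≤ 2 * r / n * (∑ j ∈ Ico r n, (1 : ℝ) / j - 1 + r / n) := by
        gcongr
        exact log_sub_log_le_sum_Ico_inv hr hrn

lemma one_sixth_lt_of_log_eq {ϑ : ℝ} (hϑ : 0 < ϑ) (heq : log ϑ = 2 * ϑ - 2) : 1 / 6 < ϑ := by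
  have h := log_le_sub_one_of_pos (show 0 < 4 * ϑ by positivity)
  rw [log_mul (by norm_num) hϑ.ne', show (4 : ℝ) = 2 ^ 2 by norm_num, log_pow, heq] at h
  push_cast at h
  linarith [log_two_gt_d9]

lemma lt_one_third_of_log_eq {ϑ : ℝ} (hϑ : ϑ ∈ Set.Ioo (0 : ℝ) 1) (heq : log ϑ = 2 * ϑ - 2) :
    ϑ < 1 / 3 := by
  by_contra! h
  have chord := strictConcaveOn_log_Ioi.concaveOn.2 (show (1 / 3 : ℝ) ∈ Set.Ioi 0 by norm_num)
    (show (1 : ℝ) ∈ Set.Ioi 0 by norm_num) (show 0 ≤ 3 / 2 * (1 - ϑ) by linarith [hϑ.2])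
    (show 0 ≤ (3 * ϑ - 1) / 2 by linarith) (by ring)
  have hmid : 3 / 2 * (1 - ϑ) * (1 / 3) + (3 * ϑ - 1) / 2 * 1 = ϑ := by ring
  simp only [smul_eq_mul] at chord
  rw [hmid, heq, log_one, mul_zero, add_zero, one_div, log_inv] at chord
  have h3 : log 3 < 4 / 3 := by
    rw [log_lt_iff_lt_exp (by norm_num)]
    linarith [quadratic_le_exp_of_nonneg (x := 4 / 3) (by norm_num)]
  nlinarith [hϑ.2]

lemma half_le_uniformProb_one {n : ℕ} (h1 : 1 < n) (h4 : n < 4) : 1 / 2 ≤ uniformProb 1 n := by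
  interval_cases n <;> norm_num [uniformProb_eq_sum_Ico_inv, sum_Ico_succ_top]

lemma lt_uniformProb_floor {ϑ : ℝ} (hϑ : ϑ ∈ Set.Ioo (1 / 6 : ℝ) (1 / 3)) (heq : log ϑ = 2 * ϑ - 2)
    {n : ℕ} (hn : 4 ≤ n) : 2 * (ϑ - ϑ ^ 2) < uniformProb ⌊ϑ * n + 1 / 2⌋₊ n := by
  set r := ⌊ϑ * n + 1 / 2⌋₊
  have hn' : (4 : ℝ) ≤ n := by exact_mod_cast hn
  have hr_le : (r : ℝ) ≤ ϑ * n + 1 / 2 := Nat.floor_le (by nlinarith [hϑ.1])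
  have hr_gt : ϑ * n + 1 / 2 - 1 < r := Nat.sub_one_lt_floor _
  have hr : 1 ≤ r := (Nat.one_le_floor_iff _).2 (by nlinarith [hϑ.1])
  have hrn : r + 3 ≤ n := by
    have : (r : ℝ) + 3 < n + 1 := by nlinarith [hϑ.2]
    exact_mod_cast Nat.lt_succ_iff.1 (by exact_mod_cast this)
  have hcoef : 2 / ϑ - 2 < 10 := by
    have : 2 / ϑ < 12 := by rw [div_lt_iff₀ (by linarith [hϑ.1])]; linarith [hϑ.1]
    linarith
  have hcoef0 : 0 ≤ 2 / ϑ - 2 := by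
    have : 2 ≤ 2 / ϑ := by rw [le_div_iff₀ (by linarith [hϑ.1])]; linarith [hϑ.2]
    linarith
  have hround : (r - ϑ * n) ^ 2 ≤ (1 / 2 : ℝ) ^ 2 := sq_le_sq' (by linarith) (by linarith)
  have hgap : (2 / ϑ - 2) * (r - ϑ * n) ^ 2 < n - r := by
    have : ((r + 3 : ℕ) : ℝ) ≤ n := by exact_mod_cast hrn
    push_cast at this
    nlinarith
  refine lt_of_lt_of_le ?_ (le_uniformProb_of_log_eq (by linarith [hϑ.1]) heq hr (by omega))
  have : 0 < ((n - r) - (2 / ϑ - 2) * (r - ϑ * n) ^ 2) / (n : ℝ) ^ 2 :=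
    div_pos (by linarith) (by positivity)
  linarith

theorem stmt_11 (ϑ : ℝ) (hϑ : ϑ ∈ Set.Ioo (0 : ℝ) 1)
    (heq : Real.log ϑ = 2 * ϑ - 2) (n : ℕ) (hn : 1 < n) :
    2 * (ϑ - ϑ ^ 2) <
      (Finset.Icc 0 n).sup' ⟨0, Finset.mem_Icc.2 ⟨le_rfl, Nat.zero_le n⟩⟩
        (fun r => uniformProb r n) := by
  have hlo := one_sixth_lt_of_log_eq hϑ.1 heq
  have hhi := lt_one_third_of_log_eq hϑ heq
  refine (lt_sup'_iff _).2 ?_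
  rcases lt_or_ge n 4 with h4 | h4
  · refine ⟨1, mem_Icc.2 ⟨by omega, hn.le⟩, ?_⟩
    nlinarith [half_le_uniformProb_one hn h4]
  · refine ⟨⌊ϑ * n + 1 / 2⌋₊, mem_Icc.2 ⟨by omega, ?_⟩, lt_uniformProb_floor ⟨hlo, hhi⟩ heq h4⟩
    have : (4 : ℝ) ≤ n := by exact_mod_cast h4
    exact Nat.floor_le_of_le (by nlinarith)
end

section
/- Let a_n = 4n²·e^{-2n}·Σ_{i=2}^{n} (2n)^i/i!. Then a_n → 0 as n → ∞. -/
/-!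
Each term satisfies `(2n)^i / i! = 2^i · n^i / i! ≤ 2^n e^n` for `i ≤ n`, so the sum is at most
`n (2e)^n` and `a_n ≤ 4 n³ (2/e)^n`, which tends to `0` because `2 < e`.
-/

open Nat Real Filter Finset

lemma mul_pow_div_factorial_le_pow_mul_exp {c x : ℝ} (hc : 1 ≤ c) (hx : 0 ≤ x) {i n : ℕ}
    (hi : i ≤ n) : (c * x) ^ i / i ! ≤ c ^ n * exp x := by
  rw [mul_pow, mul_div_assoc]
  exact mul_le_mul (pow_le_pow_right₀ hc hi) (pow_div_factorial_le_exp x hx i)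
    (by positivity) (by positivity)

lemma sum_Icc_two_pow_div_factorial_le (n : ℕ) :
    ∑ i ∈ Icc 2 n, (2 * (n : ℝ)) ^ i / i ! ≤ n * (2 ^ n * exp n) := by
  have hcard : ((Icc 2 n).card : ℝ) ≤ n := by
    exact_mod_cast (Nat.card_Icc 2 n).trans_le (by omega)
  calc ∑ i ∈ Icc 2 n, (2 * (n : ℝ)) ^ i / i !
      ≤ (Icc 2 n).card • (2 ^ n * exp n) :=
        sum_le_card_nsmul _ _ _ fun i hi =>
          mul_pow_div_factorial_le_pow_mul_exp one_le_two n.cast_nonneg (mem_Icc.mp hi).2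
    _ ≤ n * (2 ^ n * exp n) := by
        rw [nsmul_eq_mul]
        gcongr

lemma tendsto_const_mul_pow_mul_two_div_exp_one_pow (k : ℕ) (C : ℝ) :
    Tendsto (fun n : ℕ => C * (n : ℝ) ^ k * (2 / exp 1) ^ n) atTop (nhds 0) := by
  have hr : |2 / exp 1| < 1 := by
    rw [abs_of_pos (by positivity), div_lt_one (exp_pos 1)]
    linarith [exp_one_gt_d9]
  simpa [mul_assoc] using (tendsto_pow_const_mul_const_pow_of_abs_lt_one k hr).const_mul C

theorem stmt_14 :
    Filter.Tendsto
      (fun n : ℕ => 4 * (n : ℝ) ^ 2 * Real.exp (-2 * n) *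
        ∑ i ∈ Finset.Icc 2 n, (2 * (n : ℝ)) ^ i / (Nat.factorial i))
      Filter.atTop (nhds 0) := by
  refine squeeze_zero (fun n => by positivity) (fun n => ?_)
    (tendsto_const_mul_pow_mul_two_div_exp_one_pow 3 4)
  calc 4 * (n : ℝ) ^ 2 * exp (-2 * n) * ∑ i ∈ Icc 2 n, (2 * (n : ℝ)) ^ i / i !
      ≤ 4 * (n : ℝ) ^ 2 * exp (-2 * n) * (n * (2 ^ n * exp n)) := by
        gcongr
        exact sum_Icc_two_pow_div_factorial_le n
    _ = 4 * (n : ℝ) ^ 3 * (2 / exp 1) ^ n := by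
        rw [div_pow, exp_one_pow, div_eq_mul_inv, ← exp_neg,
          show -(n : ℝ) = -2 * n + n by ring, exp_add]
        ring
end

section
/- For λ > 0, define f(λ) = Σ_{i=2}^{⌊λ/2⌋} (2(i - λ/2)(λ/2)/(i(i-1)))·e^{-λ}λ^i/i!. Then f(λ) → 0 as λ → ∞. -/
/-!
Each coefficient is at most `(λ/2)²` in absolute value, so the sum is at most `(λ/2)²` times the
Poisson mass of `[0, λ/2]`. A Chernoff bound makes that mass exponentially small,
`exp (-λ (1 - log 2) / 2)`, which beats the polynomial factor.
-/

open Filter Real Finset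
open scoped Nat

lemma abs_two_mul_sub_mul_div_le_sq {i x : ℝ} (hi : 2 ≤ i) (hix : i ≤ x) :
    |2 * (i - x) * x / (i * (i - 1))| ≤ x ^ 2 := by
  have hden : 2 ≤ i * (i - 1) := by nlinarith
  have hnum : |2 * (i - x) * x| ≤ 2 * x ^ 2 := by
    rw [abs_mul, abs_mul, abs_of_nonneg (by linarith : (0 : ℝ) ≤ x), abs_sub_comm,
      abs_of_nonneg (by linarith : 0 ≤ x - i), abs_two]
    nlinarith
  rw [abs_div, abs_of_pos (by linarith : (0 : ℝ) < i * (i - 1)),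
    div_le_iff₀ (by linarith)]
  nlinarith [sq_nonneg x]

/-- Chernoff bound for the lower tail `P(X ≤ t λ)` of a Poisson variable `X` of mean `λ`. -/
lemma sum_range_exp_neg_mul_pow_div_factorial_le {lam t : ℝ} (hlam : 0 ≤ lam) (ht₀ : 0 < t)
    (ht₁ : t ≤ 1) {n : ℕ} (hn : (n : ℝ) ≤ t * lam) :
    ∑ i ∈ range (n + 1), exp (-lam) * lam ^ i / i ! ≤ exp (-(lam * (1 - t + t * log t))) := by
  have hlog : log t ≤ 0 := log_nonpos ht₀.le ht₁
  have hterm : ∀ i ∈ range (n + 1), exp (-lam) * lam ^ i / i ! ≤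
      exp (-lam - t * lam * log t) * ((t * lam) ^ i / i !) := by
    intro i hi
    have hit : (i : ℝ) ≤ t * lam := le_trans (by exact_mod_cast mem_range_succ_iff.mp hi) hn
    -- `t ^ i = exp (i log t) ≥ exp (t λ log t)` since `log t ≤ 0`
    have hti : exp (t * lam * log t) ≤ t ^ i := by
      rw [← exp_log ht₀, ← exp_nat_mul, exp_log ht₀]
      exact exp_le_exp.mpr (by nlinarith)
    have hpow : lam ^ i ≤ exp (-(t * lam * log t)) * (t * lam) ^ i := by
      rw [mul_pow, ← mul_assoc, exp_neg]
      refine le_mul_of_one_le_left (by positivity) ?_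
      rw [inv_mul_eq_div, one_le_div (exp_pos _)]
      exact hti
    calc exp (-lam) * lam ^ i / i !
        ≤ exp (-lam) * (exp (-(t * lam * log t)) * (t * lam) ^ i) / i ! := by gcongr
      _ = exp (-lam - t * lam * log t) * ((t * lam) ^ i / i !) := by
        rw [sub_eq_add_neg, exp_add]
        ring
  calc ∑ i ∈ range (n + 1), exp (-lam) * lam ^ i / i !
      ≤ ∑ i ∈ range (n + 1), exp (-lam - t * lam * log t) * ((t * lam) ^ i / i !) :=
        sum_le_sum hterm
    _ ≤ exp (-lam - t * lam * log t) * exp (t * lam) := by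
        rw [← mul_sum]
        gcongr
        exact sum_le_exp_of_nonneg (by positivity) _
    _ = exp (-(lam * (1 - t + t * log t))) := by
        rw [← exp_add]
        ring_nf

lemma norm_sum_le_sq_mul_exp {lam : ℝ} (hlam : 0 ≤ lam) :
    ‖∑ i ∈ Icc 2 ⌊lam / 2⌋₊, (2 * ((i : ℝ) - lam / 2) * (lam / 2) / (i * ((i : ℝ) - 1))) *
        (exp (-lam) * lam ^ i / i !)‖ ≤ (lam / 2) ^ 2 * exp (-((1 - log 2) / 2 * lam)) := by
  set n := ⌊lam / 2⌋₊
  have hn : (n : ℝ) ≤ 1 / 2 * lam := by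
    rw [one_div_mul_eq_div]
    exact Nat.floor_le (by positivity)
  calc _ ≤ ∑ i ∈ Icc 2 n, (lam / 2) ^ 2 * (exp (-lam) * lam ^ i / i !) := by
        refine (norm_sum_le _ _).trans (sum_le_sum fun i hi => ?_)
        obtain ⟨hi₂, hin⟩ := mem_Icc.mp hi
        have hp : 0 ≤ exp (-lam) * lam ^ i / i ! := by positivity
        rw [norm_mul, Real.norm_of_nonneg hp, Real.norm_eq_abs]
        gcongr
        refine abs_two_mul_sub_mul_div_le_sq (by exact_mod_cast hi₂ : (2 : ℝ) ≤ i) ?_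
        exact (Nat.cast_le.mpr hin).trans (by linarith)
    _ ≤ (lam / 2) ^ 2 * ∑ i ∈ range (n + 1), exp (-lam) * lam ^ i / i ! := by
        rw [← mul_sum]
        gcongr (lam / 2) ^ 2 * ?_
        refine sum_le_sum_of_subset_of_nonneg (fun i hi => ?_) fun _ _ _ => by positivity
        simp only [mem_Icc, mem_range] at hi ⊢
        omega
    _ ≤ (lam / 2) ^ 2 * exp (-((1 - log 2) / 2 * lam)) := by
        gcongr
        refine (sum_range_exp_neg_mul_pow_div_factorial_le hlam one_half_pos
          (by norm_num) hn).trans_eq ?_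
        rw [one_div, log_inv]
        ring_nf

theorem stmt_15 :
    Filter.Tendsto
      (fun lam : ℝ => ∑ i ∈ Finset.Icc 2 ⌊lam / 2⌋₊,
        (2 * ((i : ℝ) - lam / 2) * (lam / 2) / (i * ((i : ℝ) - 1))) *
          (Real.exp (-lam) * lam ^ i / (Nat.factorial i)))
      Filter.atTop (nhds 0) := by
  have hc : 0 < (1 - log 2) / 2 := by linarith [log_two_lt_d9]
  have hbound : Tendsto (fun lam : ℝ => (lam / 2) ^ 2 * exp (-((1 - log 2) / 2 * lam)))
      atTop (nhds 0) := by
    have := (tendsto_rpow_mul_exp_neg_mul_atTop_nhds_zero 2 _ hc).const_mul (1 / 4)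
    rw [mul_zero] at this
    refine this.congr' ?_
    filter_upwards [eventually_ge_atTop 0] with lam hlam
    rw [rpow_two, neg_mul]
    ring
  exact squeeze_zero_norm' (eventually_ge_atTop 0 |>.mono fun _ => norm_sum_le_sq_mul_exp) hbound
end

section
/- The function g(x) = 2x(1 - x + x·log x) on (0,1) attains its unique maximum at the point θ = -1/(2·W₋₁(-1/(2√e))), which is the unique solution in (0,1/2) of 2x·log x = x - 1, and the maximum value is g(θ) = θ - θ². -/
/-!
Write `h x = 2 x log x - x + 1`, so that `g' = 2h`. Since `x log x` is strictly convex, so is `h`;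
it vanishes at `θ` and at `1`, hence is positive on `(0, θ)` and negative on `(θ, 1)`. Thus `g`
increases strictly up to `θ` and decreases strictly after it, and `θ` is the only zero of `h` in
`(0, 1)`. Finally `h θ = 0` turns `g θ` into `θ - θ²`.
-/

open Real Set

namespace StrictConvexOn

variable {s : Set ℝ} {f : ℝ → ℝ} {a b x : ℝ}

lemma neg_of_mem_Ioo_of_eq_zero (hf : StrictConvexOn ℝ s f) (ha : a ∈ s) (hb : b ∈ s)
    (hfa : f a = 0) (hfb : f b = 0) (hx : x ∈ Ioo a b) : f x < 0 := by
  simpa [hfa, hfb] using hf.lt_on_openSegment ha hb (hx.1.trans hx.2).ne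
    (by rwa [openSegment_eq_Ioo (hx.1.trans hx.2)])

lemma pos_of_lt_of_eq_zero (hf : StrictConvexOn ℝ s f) (hx : x ∈ s) (hb : b ∈ s)
    (hfa : f a = 0) (hfb : f b = 0) (hxa : x < a) (hab : a < b) : 0 < f x := by
  simpa [hfa, hfb] using hf.lt_on_openSegment (z := a) hx hb (hxa.trans hab).ne
    (by rw [openSegment_eq_Ioo (hxa.trans hab)]; exact ⟨hxa, hab⟩)

end StrictConvexOn

lemma strictConvexOn_two_mul_mul_log_sub_add_one :
    StrictConvexOn ℝ (Ici 0) fun x : ℝ => 2 * x * log x - x + 1 :=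
  ((strictConvexOn_mul_log.add strictConvexOn_mul_log).add_convexOn
    ((convexOn_const 1 (convex_Ici 0)).sub (concaveOn_id (convex_Ici 0)))).congr
    fun x _ => by simp only [Pi.add_apply, Pi.sub_apply, id]; ring

lemma hasDerivAt_two_mul_mul_one_sub_add_mul_log {x : ℝ} (hx : x ≠ 0) :
    HasDerivAt (fun x : ℝ => 2 * x * (1 - x + x * log x)) (2 * (2 * x * log x - x + 1)) x := by
  have := ((hasDerivAt_id' x).const_mul 2).fun_mul
    (((hasDerivAt_const x 1).fun_sub (hasDerivAt_id' x)).fun_add (hasDerivAt_mul_log hx))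
  exact this.congr_deriv (by ring)

section

variable {θ x : ℝ}

lemma two_mul_mul_log_sub_add_one_pos (hθ : 2 * θ * log θ - θ + 1 = 0) (hθ1 : θ < 1)
    (hx : x ∈ Ioo 0 θ) : 0 < 2 * x * log x - x + 1 :=
  strictConvexOn_two_mul_mul_log_sub_add_one.pos_of_lt_of_eq_zero (a := θ) (b := 1)
    (mem_Ici.2 hx.1.le) (mem_Ici.2 zero_le_one) hθ (by simp) hx.2 hθ1

lemma two_mul_mul_log_sub_add_one_neg (hθ : 2 * θ * log θ - θ + 1 = 0) (hθ0 : 0 < θ)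
    (hx : x ∈ Ioo θ 1) : 2 * x * log x - x + 1 < 0 :=
  strictConvexOn_two_mul_mul_log_sub_add_one.neg_of_mem_Ioo_of_eq_zero
    (mem_Ici.2 hθ0.le) (mem_Ici.2 zero_le_one) hθ (by simp) hx

lemma strictMonoOn_two_mul_mul_one_sub_add_mul_log (hθ : 2 * θ * log θ - θ + 1 = 0)
    (hθ1 : θ < 1) : StrictMonoOn (fun x : ℝ => 2 * x * (1 - x + x * log x)) (Ioc 0 θ) := by
  have hg {x : ℝ} (hx : x ∈ Ioc 0 θ) := hasDerivAt_two_mul_mul_one_sub_add_mul_log hx.1.ne'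
  refine strictMonoOn_of_hasDerivWithinAt_pos (convex_Ioc 0 θ)
    (fun x hx => (hg hx).continuousAt.continuousWithinAt)
    (fun x hx => (hg (interior_subset hx)).hasDerivWithinAt) fun x hx => ?_
  rw [interior_Ioc] at hx
  linarith [two_mul_mul_log_sub_add_one_pos hθ hθ1 hx]

lemma strictAntiOn_two_mul_mul_one_sub_add_mul_log (hθ : 2 * θ * log θ - θ + 1 = 0)
    (hθ0 : 0 < θ) : StrictAntiOn (fun x : ℝ => 2 * x * (1 - x + x * log x)) (Ico θ 1) := by
  have hg {x : ℝ} (hx : x ∈ Ico θ 1) :=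
    hasDerivAt_two_mul_mul_one_sub_add_mul_log (hθ0.trans_le hx.1).ne'
  refine strictAntiOn_of_hasDerivWithinAt_neg (convex_Ico θ 1)
    (fun x hx => (hg hx).continuousAt.continuousWithinAt)
    (fun x hx => (hg (interior_subset hx)).hasDerivWithinAt) fun x hx => ?_
  rw [interior_Ico] at hx
  linarith [two_mul_mul_log_sub_add_one_neg hθ hθ0 hx]

end

theorem stmt_19 (θ : ℝ) (hθ : θ ∈ Set.Ioo (0 : ℝ) (1 / 2))
    (heq : 2 * θ * Real.log θ = θ - 1) :
    (∀ x ∈ Set.Ioo (0 : ℝ) (1 / 2), 2 * x * Real.log x = x - 1 → x = θ) ∧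
      (∀ x ∈ Set.Ioo (0 : ℝ) 1, x ≠ θ →
        2 * x * (1 - x + x * Real.log x) < 2 * θ * (1 - θ + θ * Real.log θ)) ∧
      2 * θ * (1 - θ + θ * Real.log θ) = θ - θ ^ 2 := by
  obtain ⟨hθ0, hθ_half⟩ := hθ
  have hθ1 : θ < 1 := by linarith
  have hθ_zero : 2 * θ * log θ - θ + 1 = 0 := by linarith
  refine ⟨fun x hx hx_zero => ?_, fun x hx hne => ?_, by linear_combination θ * heq⟩
  · rcases lt_trichotomy x θ with hlt | rfl | hgt
    · linarith [two_mul_mul_log_sub_add_one_pos hθ_zero hθ1 ⟨hx.1, hlt⟩]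
    · rfl
    · linarith [two_mul_mul_log_sub_add_one_neg hθ_zero hθ0 ⟨hgt, by linarith [hx.2]⟩]
  · rcases hne.lt_or_gt with hlt | hgt
    · exact strictMonoOn_two_mul_mul_one_sub_add_mul_log hθ_zero hθ1 ⟨hx.1, hlt.le⟩
        ⟨hθ0, le_rfl⟩ hlt
    · exact strictAntiOn_two_mul_mul_one_sub_add_mul_log hθ_zero hθ0 ⟨le_rfl, hθ1⟩
        ⟨hgt.le, hx.2⟩ hgt
end
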